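/- There exists a finite simple graph G that is connected, but whose clique complex X(G) is disconnected at the 1-simplex level: the 1-level adjacency graph of X(G) is not connected. In particular, the clique complex of a connected graph need not be connected. (Corollary 1 of the paper.) -/

import Mathlib

open Finset

/-- An abstract simplicial complex on a vertex type `V`: a set of finsets, all nonempty,
closed under taking nonempty subsets. -/
def IsASC {V : Type*} (Δ : Set (Finset V)) : Prop :=
  (∀ σ ∈ Δ, σ.Nonempty) ∧ ∀ σ ∈ Δ, ∀ τ : Finset V, τ.Nonempty → τ ⊆ σ → τ ∈ Δ

/-- Two `k`-simplices are lower adjacent if they share a common `(k-1)`-simplex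
(a member of `Δ` of cardinality `k`). -/
def LowerAdj {V : Type*} (Δ : Set (Finset V)) (k : ℕ) (σ τ : Finset V) : Prop :=
  ∃ ρ ∈ Δ, ρ.card = k ∧ ρ ⊆ σ ∧ ρ ⊆ τ

/-- Two `k`-simplices are upper adjacent if both are faces of a common `(k+1)`-simplex
(a member of `Δ` of cardinality `k+2`). -/
def UpperAdj {V : Type*} (Δ : Set (Finset V)) (k : ℕ) (σ τ : Finset V) : Prop :=
  ∃ ρ ∈ Δ, ρ.card = k + 2 ∧ σ ⊆ ρ ∧ τ ⊆ ρ

/-- Adjacency at level `k`: two distinct `k`-simplices of `Δ` are adjacent iff they are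
lower adjacent and not upper adjacent. -/
def LevelAdj {V : Type*} (Δ : Set (Finset V)) (k : ℕ) (σ τ : Finset V) : Prop :=
  σ ≠ τ ∧ (σ ∈ Δ ∧ σ.card = k + 1) ∧ (τ ∈ Δ ∧ τ.card = k + 1) ∧
    LowerAdj Δ k σ τ ∧ ¬ UpperAdj Δ k σ τ

/-- The `k`-level adjacency graph of `Δ`: the simple graph on the `k`-simplices of `Δ`
in which two distinct `k`-simplices are adjacent iff they are lower adjacent and not
upper adjacent. -/
def levelGraph {V : Type*} (Δ : Set (Finset V)) (k : ℕ) :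
    SimpleGraph {σ : Finset V // σ ∈ Δ ∧ σ.card = k + 1} where
  Adj σ τ := LevelAdj Δ k σ.1 τ.1
  symm := by
    constructor
    rintro σ τ ⟨h1, h2, h3, ⟨ρ, hρ, hc, hs, ht⟩, h5⟩
    exact ⟨h1.symm, h3, h2, ⟨ρ, hρ, hc, ht, hs⟩,
      fun ⟨ρ', hρ', hc', hs', ht'⟩ => h5 ⟨ρ', hρ', hc', ht', hs'⟩⟩
  loopless := by constructor; rintro σ ⟨h1, _⟩; exact h1 rfl

/-- The clique complex of a simple graph `G`: all nonempty finsets of vertices that are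
cliques of `G`. -/
def cliqueComplex {V : Type*} (G : SimpleGraph V) : Set (Finset V) :=
  {σ : Finset V | σ.Nonempty ∧ G.IsClique (σ : Set V)}

/-! The triangle `K₃` is a witness: its clique complex is the full 2-simplex, so any two of
its three edges are faces of the common 2-simplex and hence upper adjacent. The 1-level
adjacency graph therefore has no edges at all, and three isolated vertices are not
connected. -/

open SimpleGraph

theorem mem_cliqueComplex_top {V : Type*} {σ : Finset V} (hσ : σ.Nonempty) :
    σ ∈ cliqueComplex (⊤ : SimpleGraph V) :=
  ⟨hσ, IsClique.top _⟩

theorem levelGraph_eq_bot_of_univ_mem {V : Type*} [Fintype V] {Δ : Set (Finset V)} {k : ℕ}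
    (huniv : univ ∈ Δ) (hcard : Fintype.card V = k + 2) : levelGraph Δ k = ⊥ := by
  ext σ τ
  simp only [bot_adj, iff_false]
  rintro ⟨-, -, -, -, hupper⟩
  exact hupper ⟨univ, huniv, by rw [card_univ, hcard], subset_univ _, subset_univ _⟩

/-- **Corollary 1 of the paper.** There is a connected finite simple graph whose clique
complex is disconnected at the `1`-simplex level. -/
theorem exists_connected_graph_with_disconnected_clique_complex :
    ∃ (V : Type) (_ : Fintype V) (_ : DecidableEq V) (G : SimpleGraph V),
      G.Connected ∧ ¬ (levelGraph (cliqueComplex G) 1).Connected := by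
  refine ⟨Fin 3, inferInstance, inferInstance, ⊤, connected_top, ?_⟩
  rw [levelGraph_eq_bot_of_univ_mem (mem_cliqueComplex_top univ_nonempty) (Fintype.card_fin 3)]
  have : Nontrivial {σ : Finset (Fin 3) // σ ∈ cliqueComplex ⊤ ∧ σ.card = 1 + 1} :=
    ⟨⟨⟨{0, 1}, mem_cliqueComplex_top (insert_nonempty _ _), rfl⟩,
      ⟨{0, 2}, mem_cliqueComplex_top (insert_nonempty _ _), rfl⟩, by decide⟩⟩
  exact not_connected_bot
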